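/- Let n, d, ℓ be integers with 0 ≤ ℓ < d ≤ ⌊(n+ℓ−1)/2⌋. If G is an n-vertex simple graph with minimum degree δ(G) ≥ d, and G is not ℓ-hamiltonian, then e(G) ≤ max{ h(n,d,ℓ), h(n, ⌊(n+ℓ−1)/2⌋, ℓ) }. -/

import Mathlib

/-!
Enlarge `G` to an `ℓ`-saturated graph `H`. As the complete graph is `ℓ`-hamiltonian, `H` has a
non-edge `uv`, and a linear forest `F` witnessing that `H` is not `ℓ`-hamiltonian then lies on a
hamiltonian path of `H` between two non-adjacent vertices. Take such a path `a ⋯ b` maximising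
`deg a + deg b`, with `k = deg a ≤ deg b`. For each of the at least `k - ℓ` neighbours `y` of `a`
entered along an edge `xy ∉ F`, Pósa rotation gives a hamiltonian path `x ⋯ b` through `F`, so
`x ≁ b` (else there is a hamiltonian cycle through `F`) and `deg x ≤ k` by maximality. Ore's count
gives `2k ≤ n - 1 + ℓ`, and counting edges at these `k - ℓ` low-degree vertices separately gives
`e(G) ≤ h(n, k, ℓ)`, which is convex in `k ∈ [d, ⌊(n + ℓ - 1)/2⌋]`.
-/

open SimpleGraph

/-- A linear forest: an acyclic graph with maximum degree at most 2. -/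
def SimpleGraph.IsLinearForest {V : Type*} (F : SimpleGraph V) : Prop :=
  F.IsAcyclic ∧ ∀ v a b c : V, F.Adj v a → F.Adj v b → F.Adj v c → a = b ∨ a = c ∨ b = c

/-- A graph is `ℓ`-hamiltonian if every linear forest with `ℓ` edges contained in it
extends to a hamiltonian cycle. -/
def SimpleGraph.IsLHamiltonian {V : Type*} [DecidableEq V] (G : SimpleGraph V) (ℓ : ℕ) : Prop :=
  ∀ F : SimpleGraph V, F ≤ G → F.IsLinearForest → F.edgeSet.ncard = ℓ →
    ∃ (v : V) (c : G.Walk v v), c.IsHamiltonianCycle ∧ ∀ e ∈ F.edgeSet, e ∈ c.edges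

/-- The graph `H_{n,d,ℓ}`: a complete graph on `A = {0, …, n-d+ℓ-1}` together with `d-ℓ`
further vertices, each adjacent to the set `B = {0, …, d-1} ⊆ A`. -/
def Hgraph (n d ℓ : ℕ) : SimpleGraph (Fin n) where
  Adj u v := u ≠ v ∧ ((u.val < n - d + ℓ ∧ v.val < n - d + ℓ) ∨
    (u.val < d ∧ n - d + ℓ ≤ v.val) ∨ (v.val < d ∧ n - d + ℓ ≤ u.val))
  symm := by constructor; intro u v h; exact ⟨h.1.symm, by tauto⟩
  loopless := by constructor; intro v h; exact h.1 rfl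

/-- The graph `H'_{n,d,ℓ}`: a complete graph on `{0, …, n-d+ℓ-1}` and a complete graph on
`{n-d-1, …, n-1}` sharing `ℓ+1` vertices. -/
def H'graph (n d ℓ : ℕ) : SimpleGraph (Fin n) where
  Adj u v := u ≠ v ∧ ((u.val < n - d + ℓ ∧ v.val < n - d + ℓ) ∨
    (n - d - 1 ≤ u.val ∧ n - d - 1 ≤ v.val))
  symm := by constructor; intro u v h; exact ⟨h.1.symm, by tauto⟩
  loopless := by constructor; intro v h; exact h.1 rfl

/-- `h_r(n,d,ℓ) = C(n-d+ℓ, r) + (d-ℓ) C(d, r-1)`. -/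
def hrfun (n d r ℓ : ℕ) : ℕ := Nat.choose (n - d + ℓ) r + (d - ℓ) * Nat.choose d (r - 1)

/-- `h(n,d,ℓ) = C(n-d+ℓ, 2) + (d-ℓ) d`. -/
def hfun (n d ℓ : ℕ) : ℕ := Nat.choose (n - d + ℓ) 2 + (d - ℓ) * d

/-- The number of `r`-cliques of `G`. -/
noncomputable def cliqueCount {V : Type*} (G : SimpleGraph V) (r : ℕ) : ℕ :=
  {s : Finset V | G.IsNClique r s}.ncard

/-- `G` is `ℓ`-saturated: not `ℓ`-hamiltonian, but adding any edge makes it `ℓ`-hamiltonian. -/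
def SimpleGraph.IsLSaturated {V : Type*} [DecidableEq V] (G : SimpleGraph V) (ℓ : ℕ) : Prop :=
  ¬ G.IsLHamiltonian ℓ ∧
    ∀ u v : V, u ≠ v → ¬ G.Adj u v → (G ⊔ SimpleGraph.edge u v).IsLHamiltonian ℓ

namespace SimpleGraph.Walk

variable {V : Type*} {G : SimpleGraph V} {a b : V} {p : G.Walk a b}

theorem exists_eq_append_cons_of_mem_darts {t : G.Dart} (ht : t ∈ p.darts) :
    ∃ (q : G.Walk a t.fst) (r : G.Walk t.snd b), p = q.append (cons t.adj r) := by
  induction p with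
  | nil => simp at ht
  | cons h p ih =>
    rcases List.mem_cons.mp ht with rfl | ht
    · exact ⟨nil, p, rfl⟩
    · obtain ⟨q, r, rfl⟩ := ih ht
      exact ⟨cons h q, r, rfl⟩

theorem exists_mem_darts_snd_eq {v : V} (hv : v ∈ p.support) (hva : v ≠ a) :
    ∃ t ∈ p.darts, t.snd = v := by
  rw [← cons_tail_support, List.mem_cons, ← map_snd_darts, List.mem_map] at hv
  exact hv.resolve_left hva

theorem IsPath.fst_ne_of_mem_darts (hp : p.IsPath) {t : G.Dart}
    (ht : t ∈ p.darts) : t.fst ≠ b := by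
  have h := hp.support_nodup
  rw [← map_fst_darts_append, List.nodup_append] at h
  exact h.2.2 _ (List.mem_map_of_mem ht) _ (List.mem_singleton_self _)

theorem IsPath.injOn_fst_darts (hp : p.IsPath) :
    Set.InjOn (·.fst : G.Dart → V) {t | t ∈ p.darts} := by
  refine List.inj_on_of_nodup_map ?_
  rw [map_fst_darts]
  exact hp.support_nodup.sublist (List.dropLast_sublist _)

theorem IsPath.injOn_snd_darts (hp : p.IsPath) :
    Set.InjOn (·.snd : G.Dart → V) {t | t ∈ p.darts} := by
  refine List.inj_on_of_nodup_map ?_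
  rw [map_snd_darts]
  exact hp.support_nodup.sublist (List.tail_sublist _)

theorem IsPath.injOn_edge_darts (hp : p.IsPath) :
    Set.InjOn Dart.edge {t | t ∈ p.darts} :=
  List.inj_on_of_nodup_map (edges_nodup_of_support_nodup hp.support_nodup)

theorem IsPath.card_le_ncard_edgeSet [Finite V] {F : SimpleGraph V} (hp : p.IsPath)
    {s : Finset G.Dart} (hs : ∀ t ∈ s, t ∈ p.darts ∧ t.edge ∈ F.edgeSet) :
    s.card ≤ F.edgeSet.ncard := by
  rw [← Set.ncard_coe_finset, ← (hp.injOn_edge_darts.mono fun t ht => (hs t ht).1).ncard_image]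
  exact Set.ncard_le_ncard (Set.image_subset_iff.mpr fun t ht => (hs t ht).2)

variable [DecidableEq V]

theorem IsHamiltonian.of_support_perm {x y : V} {q : G.Walk x y}
    (hp : p.IsHamiltonian) (h : q.support.Perm p.support) : q.IsHamiltonian :=
  fun v => h.count_eq v ▸ hp v

theorem IsHamiltonian.reverse (hp : p.IsHamiltonian) : p.reverse.IsHamiltonian :=
  hp.of_support_perm (by rw [support_reverse]; exact List.reverse_perm _)

theorem IsHamiltonian.isHamiltonianCycle_cons (hp : p.IsHamiltonian)
    (h : G.Adj b a) (hlen : p.length ≠ 1) : (cons h p).IsHamiltonianCycle := by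
  rw [isHamiltonianCycle_iff_isCycle_and_support_count_tail_eq_one, cons_isCycle_iff]
  refine ⟨⟨hp.isPath, fun he => hlen (hp.isPath.length_eq_one_of_mem_edges ?_)⟩, hp⟩
  rwa [Sym2.eq_swap]

theorem IsHamiltonianCycle.transfer {H : SimpleGraph V} {c : G.Walk a a}
    (hc : c.IsHamiltonianCycle) (h : ∀ e ∈ c.edges, e ∈ H.edgeSet) :
    (c.transfer H h).IsHamiltonianCycle := by
  rw [isHamiltonianCycle_iff_isCycle_and_support_count_tail_eq_one, support_transfer] at *
  exact ⟨hc.1.transfer h, hc.2⟩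

theorem IsHamiltonianCycle.exists_isHamiltonian_of_mem_darts {c : G.Walk a a}
    (hc : c.IsHamiltonianCycle) {t : G.Dart} (ht : t ∈ c.darts) :
    ∃ p : G.Walk t.snd t.fst, p.IsHamiltonian ∧ ∀ e, e ∈ p.edges ↔ e ∈ c.edges ∧ e ≠ t.edge := by
  have hnodup := hc.isCycle.edges_nodup
  have hcount := (isHamiltonianCycle_iff_isCycle_and_support_count_tail_eq_one.mp hc).2
  obtain ⟨q, r, rfl⟩ := exists_eq_append_cons_of_mem_darts ht
  refine ⟨r.append q, fun v => ?_, fun e => ?_⟩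
  · have := hcount v
    rw [support_append, support_cons, List.tail_cons, ← cons_tail_support q] at this
    rw [support_append, List.count_append, add_comm]
    simpa [List.count_append] using this
  · have hte : t.edge = s(t.fst, t.snd) := rfl
    simp only [edges_append, edges_cons, List.nodup_append, List.nodup_cons] at hnodup ⊢
    grind

theorem IsHamiltonianCycle.exists_isHamiltonian_of_mem_edges {c : G.Walk a a}
    (hc : c.IsHamiltonianCycle) {u v : V} (he : s(u, v) ∈ c.edges) :
    ∃ p : G.Walk v u, p.IsHamiltonian ∧ ∀ e, e ∈ p.edges ↔ e ∈ c.edges ∧ e ≠ s(u, v) := by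
  obtain ⟨⟨⟨x, y⟩, hxy⟩, ht, hte⟩ := List.mem_map.mp he
  obtain ⟨p, hp, hpe⟩ := hc.exists_isHamiltonian_of_mem_darts ht
  rcases Sym2.eq_iff.mp hte with ⟨rfl, rfl⟩ | ⟨rfl, rfl⟩
  · exact ⟨p, hp, hpe⟩
  · refine ⟨p.reverse, hp.reverse, fun e => ?_⟩
    rw [edges_reverse, List.mem_reverse, hpe, Sym2.eq_swap]
    rfl

/-- Pósa rotation: `a ⋯ x y ⋯ b` becomes `x ⋯ a y ⋯ b`. -/
theorem IsHamiltonian.exists_rotate (hp : p.IsHamiltonian) {t : G.Dart} (ht : t ∈ p.darts)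
    (ha : G.Adj a t.snd) :
    ∃ p' : G.Walk t.fst b, p'.IsHamiltonian ∧ p'.length = p.length ∧
      ∀ e ∈ p.edges, e ≠ t.edge → e ∈ p'.edges := by
  obtain ⟨q, r, rfl⟩ := exists_eq_append_cons_of_mem_darts ht
  refine ⟨q.reverse.append (cons ha r), hp.of_support_perm ?_, by simp, fun e he hne => ?_⟩
  · simp only [support_append, support_reverse, support_cons, List.tail_cons]
    exact (List.reverse_perm _).append_right _
  · have hte : t.edge = s(t.fst, t.snd) := rfl
    simp only [edges_append, edges_cons, edges_reverse, List.mem_append, List.mem_cons,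
      List.mem_reverse] at he ⊢
    grind

/-- The rotated path `x ⋯ a y ⋯ b` closed up by the edge `bx`. -/
theorem IsHamiltonian.exists_isHamiltonianCycle_rotate (hp : p.IsHamiltonian) (hab : ¬G.Adj a b)
    {t : G.Dart} (ht : t ∈ p.darts) (ha : G.Adj a t.snd) (hb : G.Adj t.fst b) :
    ∃ c : G.Walk b b, c.IsHamiltonianCycle ∧ ∀ e ∈ p.edges, e ≠ t.edge → e ∈ c.edges := by
  obtain ⟨p', hp', hlen, hp'e⟩ := hp.exists_rotate ht ha
  refine ⟨cons hb.symm p', hp'.isHamiltonianCycle_cons hb.symm ?_, fun e he hne => ?_⟩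
  · exact hlen ▸ fun h => hab (adj_of_length_eq_one h)
  · exact List.mem_cons_of_mem _ (hp'e e he hne)

/-- Move `v` to the front: delete it from the path, join its two neighbours (adjacent in `⊤`), and
prepend it. -/
theorem IsHamiltonian.exists_top_cons {p : (⊤ : SimpleGraph V).Walk a b} (hp : p.IsHamiltonian)
    {v : V} (hva : v ≠ a) :
    ∃ (b' : V) (p' : (⊤ : SimpleGraph V).Walk v b'), p'.IsHamiltonian ∧ s(v, a) ∈ p'.edges ∧
      ∀ e ∈ p.edges, v ∉ e → e ∈ p'.edges := by
  obtain ⟨t, ht, rfl⟩ := exists_mem_darts_snd_eq (hp.mem_support v) hva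
  obtain ⟨q, r, rfl⟩ := exists_eq_append_cons_of_mem_darts ht
  have hnd := hp.isPath.support_nodup
  have hte : t.edge = s(t.fst, t.snd) := rfl
  cases r with
  | nil =>
    refine ⟨_, cons hva q, hp.of_support_perm ?_, by simp, fun e he hv => ?_⟩
    · simp only [support_cons, support_append, support_nil, List.tail_cons]
      exact List.perm_append_singleton _ _ |>.symm
    · simp only [edges_cons, edges_append, edges_nil, List.mem_append, List.mem_cons] at he ⊢
      grind [Sym2.mem_mk_right]
  | @cons _ z _ h r =>
    have hxz : t.fst ≠ z := by
      simp only [support_append, support_cons, List.tail_cons] at hnd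
      rintro rfl
      exact List.disjoint_of_nodup_append hnd q.end_mem_support
        (List.mem_cons_of_mem _ r.start_mem_support)
    refine ⟨_, cons hva (q.append (cons hxz r)), hp.of_support_perm ?_, by simp,
      fun e he hv => ?_⟩
    · simp only [support_cons, support_append, List.tail_cons]
      exact List.perm_middle.symm
    · simp only [edges_cons, edges_append, List.mem_append, List.mem_cons] at he ⊢
      grind [Sym2.mem_mk_right, Sym2.mem_mk_left]

theorem exists_isHamiltonian_top [Fintype V] (v : V) :
    ∃ (b : V) (p : (⊤ : SimpleGraph V).Walk v b), p.IsHamiltonian := by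
  have hnd : (v :: (Finset.univ.erase v).toList).Nodup :=
    List.nodup_cons.mpr ⟨by simp, Finset.nodup_toList _⟩
  have hchain := (List.nodup_iff_pairwise_ne.mp hnd).isChain.imp (S := (⊤ : SimpleGraph V).Adj)
    fun _ _ h => h
  refine ⟨_, (ofSupport _ (List.cons_ne_nil _ _) hchain).copy List.head_cons rfl, fun x => ?_⟩
  rw [support_copy, support_ofSupport]
  exact List.count_eq_one_of_mem hnd (by by_cases hx : x = v <;> simp [hx])

end SimpleGraph.Walk

namespace SimpleGraph

open Finset

variable {V : Type*}

theorem IsLinearForest.anti {F F' : SimpleGraph V} (hF : F.IsLinearForest) (h : F' ≤ F) :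
    F'.IsLinearForest :=
  ⟨hF.1.anti h, fun v _ _ _ ha hb hc => hF.2 v _ _ _ (h ha) (h hb) (h hc)⟩

theorem IsLinearForest.subsingleton_neighborSet_deleteEdges {F : SimpleGraph V}
    (hF : F.IsLinearForest) {u w : V} (huw : F.Adj u w) :
    ((F.deleteEdges {s(u, w)}).neighborSet w).Subsingleton := by
  intro x hx y hy
  simp only [mem_neighborSet, deleteEdges_adj, Set.mem_singleton_iff] at hx hy
  rcases hF.2 w x y u hx.1 hy.1 huw.symm with h | rfl | rfl
  · exact h
  · exact absurd Sym2.eq_swap hx.2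
  · exact absurd Sym2.eq_swap hy.2

/-- The start of a longest path is a leaf. -/
theorem IsAcyclic.exists_neighborSet_eq_singleton [Finite V] {F : SimpleGraph V}
    (hF : F.IsAcyclic) {u v : V} (huv : F.Adj u v) : ∃ x y, F.neighborSet x = {y} := by
  have : Nonempty V := ⟨u⟩
  obtain ⟨x, _, p, hp, hmax⟩ := Walk.exists_isPath_forall_isPath_length_le_length F
  have hnil : ¬p.Nil := by
    rw [← Walk.length_eq_zero_iff]
    have := hmax _ _ (Walk.cons huv .nil) (by simp [huv.ne])
    simp only [Walk.length_cons, Walk.length_nil] at this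
    omega
  refine ⟨x, p.snd, Set.eq_singleton_iff_unique_mem.mpr ⟨p.adj_snd hnil, fun z hz => ?_⟩⟩
  refine hF.eq_snd_of_adj_start hp hz (not_not.mp fun hzp => ?_)
  have := hmax _ _ (Walk.cons hz.symm p) (hp.cons hzp)
  simp at this

theorem eq_of_mem_edgeSet_of_neighborSet_eq {F : SimpleGraph V} {u w : V}
    (hu : F.neighborSet u = {w}) {e : Sym2 V} (he : e ∈ F.edgeSet) (hue : u ∈ e) :
    e = s(u, w) := by
  obtain ⟨z, rfl⟩ := Sym2.mem_iff_exists.mp hue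
  have : z ∈ F.neighborSet u := he
  rw [hu, Set.mem_singleton_iff] at this
  rw [this]

theorem exists_isHamiltonian_top_of_neighborSet_eq [DecidableEq V] {F : SimpleGraph V} {u w b : V}
    (hu : F.neighborSet u = {w}) {p : (⊤ : SimpleGraph V).Walk w b} (hp : p.IsHamiltonian)
    (hpF : ∀ e ∈ (F.deleteEdges {s(u, w)}).edgeSet, e ∈ p.edges) :
    ∃ (b' : V) (p' : (⊤ : SimpleGraph V).Walk u b'), p'.IsHamiltonian ∧
      ∀ e ∈ F.edgeSet, e ∈ p'.edges := by
  have huw : u ≠ w := (show F.Adj u w by simp [← mem_neighborSet, hu]).ne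
  obtain ⟨b', p', hp', huw', hp'e⟩ := hp.exists_top_cons huw
  refine ⟨b', p', hp', fun e he => ?_⟩
  by_cases he' : e = s(u, w)
  · exact he' ▸ huw'
  · refine hp'e e (hpF e ?_) fun hue => he' (eq_of_mem_edgeSet_of_neighborSet_eq hu he hue)
    rw [edgeSet_deleteEdges]
    exact ⟨he, he'⟩

section Complete

variable [Fintype V] [DecidableEq V]

/-- Induction on the number of edges: delete a leaf edge `uw`, lay the rest out on a path starting
at `w`, and move `u` to the front. -/
theorem IsLinearForest.exists_isHamiltonian_top {F : SimpleGraph V} (hF : F.IsLinearForest)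
    {v : V} (hv : (F.neighborSet v).Subsingleton) :
    ∃ (b : V) (p : (⊤ : SimpleGraph V).Walk v b), p.IsHamiltonian ∧
      ∀ e ∈ F.edgeSet, e ∈ p.edges := by
  induction hk : F.edgeSet.ncard generalizing F v with
  | zero =>
    obtain ⟨b, p, hp⟩ := Walk.exists_isHamiltonian_top v
    refine ⟨b, p, hp, fun e he => ?_⟩
    rw [Set.ncard_eq_zero] at hk
    simp [hk] at he
  | succ k ih =>
    have leaf : ∀ u w, F.neighborSet u = {w} → ∃ (b : V) (p : (⊤ : SimpleGraph V).Walk u b),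
        p.IsHamiltonian ∧ ∀ e ∈ F.edgeSet, e ∈ p.edges := by
      intro u w hu
      have huw : F.Adj u w := by simp [← mem_neighborSet, hu]
      obtain ⟨b, p, hp, hpF⟩ := ih (hF.anti (deleteEdges_le _))
        (hF.subsingleton_neighborSet_deleteEdges huw) (by
          rw [edgeSet_deleteEdges, Set.ncard_sdiff_singleton_of_mem (F.mem_edgeSet.mpr huw), hk,
            Nat.add_sub_cancel])
      exact exists_isHamiltonian_top_of_neighborSet_eq hu hp hpF
    by_cases hvw : ∃ w, F.Adj v w
    · obtain ⟨w, hw⟩ := hvw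
      exact leaf v w (hv.eq_singleton_of_mem hw)
    · push Not at hvw
      obtain ⟨e, he⟩ := Set.nonempty_of_ncard_ne_zero (s := F.edgeSet) (by omega)
      induction e using Sym2.ind with | _ x y => ?_
      obtain ⟨u, w, hu⟩ := hF.1.exists_neighborSet_eq_singleton (F.mem_edgeSet.mp he)
      obtain ⟨b, p, hp, hpF⟩ := leaf u w hu
      have hvu : v ≠ u := by
        rintro rfl
        exact hvw w (by simp [← mem_neighborSet, hu])
      obtain ⟨b', p', hp', -, hp'e⟩ := hp.exists_top_cons hvu
      refine ⟨b', p', hp', fun e he => hp'e e (hpF e he) fun hve => ?_⟩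
      obtain ⟨z, rfl⟩ := Sym2.mem_iff_exists.mp hve
      exact hvw z he

theorem isLHamiltonian_top (hV : 3 ≤ Fintype.card V) (ℓ : ℕ) :
    (⊤ : SimpleGraph V).IsLHamiltonian ℓ := by
  intro F _ hF _
  obtain ⟨v, hv⟩ : ∃ v, (F.neighborSet v).Subsingleton := by
    by_cases h : ∃ x y, F.Adj x y
    · obtain ⟨x, y, hxy⟩ := h
      obtain ⟨u, w, hu⟩ := hF.1.exists_neighborSet_eq_singleton hxy
      exact ⟨u, hu ▸ Set.subsingleton_singleton⟩
    · push Not at h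
      obtain ⟨v⟩ : Nonempty V := Fintype.card_pos_iff.mp (by omega)
      exact ⟨v, fun x hx => absurd hx (h v x)⟩
  obtain ⟨b, p, hp, hpF⟩ := hF.exists_isHamiltonian_top hv
  have hlen : p.length = Fintype.card V - 1 := hp.length_eq
  have hbv : (⊤ : SimpleGraph V).Adj b v := by
    rintro rfl
    have := Walk.length_eq_zero_iff.mpr (Walk.isPath_iff_nil.mp hp.isPath)
    omega
  exact ⟨b, .cons hbv p, hp.isHamiltonianCycle_cons hbv (by omega),
    fun e he => List.mem_cons_of_mem _ (hpF e he)⟩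

end Complete

section Saturated

variable [DecidableEq V]

def HasHamiltonianCycleThrough (H F : SimpleGraph V) : Prop :=
  ∃ (x : V) (c : H.Walk x x), c.IsHamiltonianCycle ∧ ∀ e ∈ F.edgeSet, e ∈ c.edges

theorem exists_le_isLSaturated [Finite V] {G : SimpleGraph V} {ℓ : ℕ}
    (hG : ¬G.IsLHamiltonian ℓ) : ∃ H, G ≤ H ∧ H.IsLSaturated ℓ := by
  obtain ⟨H, hGH, hmax⟩ :=
    Finite.exists_le_maximal (p := fun H : SimpleGraph V => ¬H.IsLHamiltonian ℓ) hG
  refine ⟨H, hGH, hmax.prop, fun u v huv hnadj => not_not.mp fun hnot => hnadj ?_⟩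
  exact hmax.2 hnot le_sup_left (by simp [edge_adj, huv])

/-- The hamiltonian cycle of `H ⊔ uv` must use `uv`; cutting it there leaves the path. -/
theorem exists_isHamiltonian_of_hasHamiltonianCycleThrough_sup_edge {H F : SimpleGraph V}
    {u v : V} (hF : F ≤ H) (hnadj : ¬H.Adj u v) (hH : ¬H.HasHamiltonianCycleThrough F)
    (h : (H ⊔ edge u v).HasHamiltonianCycleThrough F) :
    ∃ p : H.Walk v u, p.IsHamiltonian ∧ ∀ e ∈ F.edgeSet, e ∈ p.edges := by
  obtain ⟨x, c, hc, hcF⟩ := h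
  have hcH : ∀ e ∈ c.edges, e ≠ s(u, v) → e ∈ H.edgeSet := fun e he hne =>
    ((edgeSet_sup _ _ ▸ c.edges_subset_edgeSet he).resolve_right
      fun h => hne (edgeSet_edge_subset h))
  have hFuv : ∀ e ∈ F.edgeSet, e ≠ s(u, v) := fun e he h =>
    hnadj (by rw [← mem_edgeSet, ← h]; exact edgeSet_mono hF he)
  by_cases huv : s(u, v) ∈ c.edges
  · obtain ⟨p, hp, hpe⟩ := hc.exists_isHamiltonian_of_mem_edges huv
    have hpH : ∀ e ∈ p.edges, e ∈ H.edgeSet := fun e he =>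
      hcH e ((hpe e).mp he).1 ((hpe e).mp he).2
    refine ⟨p.transfer H hpH, fun w => by rw [Walk.support_transfer]; exact hp w, fun e he => ?_⟩
    rw [Walk.edges_transfer]
    exact (hpe e).mpr ⟨hcF e he, hFuv e he⟩
  · have hcH' : ∀ e ∈ c.edges, e ∈ H.edgeSet := fun e he => hcH e he fun h => huv (h ▸ he)
    exact (hH ⟨x, c.transfer H hcH', hc.transfer hcH', by simpa using hcF⟩).elim

variable {H F : SimpleGraph V} {a b : V} {p : H.Walk a b}

theorem Walk.IsHamiltonian.card_filter_adj_snd [Fintype V] [DecidableRel H.Adj]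
    (hp : p.IsHamiltonian) : #{t ∈ p.darts.toFinset | H.Adj a t.snd} = H.degree a := by
  refine card_nbij (·.snd) (fun t ht => by simpa using (mem_filter.mp ht).2)
    (hp.isPath.injOn_snd_darts.mono fun t ht => by simpa using (mem_filter.mp ht).1)
    fun w hw => ?_
  have hw : H.Adj a w := by simpa using hw
  obtain ⟨t, ht, rfl⟩ := Walk.exists_mem_darts_snd_eq (hp.mem_support w) hw.ne'
  exact ⟨t, by simpa [ht] using hw, rfl⟩

/-- Otherwise rotation closes up a hamiltonian cycle through `F`. -/
theorem Walk.IsHamiltonian.not_adj_fst_of_adj_snd (hp : p.IsHamiltonian)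
    (hpF : ∀ e ∈ F.edgeSet, e ∈ p.edges) (hab : ¬H.Adj a b)
    (hH : ¬H.HasHamiltonianCycleThrough F) {t : H.Dart} (ht : t ∈ p.darts)
    (ha : H.Adj a t.snd) (htF : t.edge ∉ F.edgeSet) : ¬H.Adj t.fst b := fun hb => by
  obtain ⟨c, hc, hce⟩ := hp.exists_isHamiltonianCycle_rotate hab ht ha hb
  exact hH ⟨b, c, hc, fun e he => hce e (hpF e he) fun h => htF (h ▸ he)⟩

/-- Ore's count: the predecessors on `p` of the neighbours of `a` are non-neighbours of `b`, except
those entered along an edge of `F`. -/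
theorem Walk.IsHamiltonian.degree_add_degree_le [Fintype V] [DecidableRel H.Adj]
    (hp : p.IsHamiltonian) (hpF : ∀ e ∈ F.edgeSet, e ∈ p.edges) (hab : ¬H.Adj a b)
    (hH : ¬H.HasHamiltonianCycleThrough F) :
    H.degree a + H.degree b ≤ Fintype.card V - 1 + F.edgeSet.ncard := by
  classical
  set N := {t ∈ p.darts.toFinset | H.Adj a t.snd}
  have hN : ∀ t ∈ N, t ∈ p.darts := fun t ht => by simpa using (mem_filter.mp ht).1
  set X := N.image (·.fst)
  have hX : #X = H.degree a := by
    rw [card_image_of_injOn (hp.isPath.injOn_fst_darts.mono hN), hp.card_filter_adj_snd]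
  have hbX : b ∉ X := by
    simp only [X, mem_image, not_exists, not_and]
    exact fun t ht => hp.isPath.fst_ne_of_mem_darts (hN t ht)
  have hinter : #(X ∩ H.neighborFinset b) ≤ F.edgeSet.ncard := by
    have hbad := hp.isPath.card_le_ncard_edgeSet (s := {t ∈ N | t.edge ∈ F.edgeSet})
      fun t ht => ⟨hN t (mem_filter.mp ht).1, (mem_filter.mp ht).2⟩
    refine le_trans (card_le_card fun x hx => ?_) ((card_image_le (f := (·.fst))).trans hbad)
    obtain ⟨t, ht, rfl⟩ := mem_image.mp (mem_inter.mp hx).1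
    have hxb : H.Adj t.fst b := (mem_neighborFinset _ _ _).mp (mem_inter.mp hx).2 |>.symm
    refine mem_image_of_mem _ (mem_filter.mpr ⟨ht, not_not.mp fun htF => ?_⟩)
    exact hp.not_adj_fst_of_adj_snd hpF hab hH (hN t ht) (mem_filter.mp ht).2 htF hxb
  have hunion : #(X ∪ H.neighborFinset b) ≤ Fintype.card V - 1 := by
    rw [← card_univ, ← card_erase_of_mem (mem_univ b)]
    refine card_le_card fun x hx => mem_erase.mpr ⟨?_, mem_univ x⟩
    rintro rfl
    rcases mem_union.mp hx with h | h
    · exact hbX h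
    · exact H.loopless.irrefl _ ((mem_neighborFinset _ _ _).mp h)
  have := card_union_add_card_inter X (H.neighborFinset b)
  rw [card_neighborFinset_eq_degree] at this
  omega

/-- The predecessors `x` of the neighbours of `a` entered along edges not in `F` start rotated
paths `x ⋯ b` through `F`. -/
theorem Walk.IsHamiltonian.exists_card_eq_forall_degree_le [Fintype V] [DecidableRel H.Adj]
    (hp : p.IsHamiltonian) (hpF : ∀ e ∈ F.edgeSet, e ∈ p.edges) (hab : ¬H.Adj a b)
    (hH : ¬H.HasHamiltonianCycleThrough F)
    (hmax : ∀ x (q : H.Walk x b), q.IsHamiltonian → (∀ e ∈ F.edgeSet, e ∈ q.edges) →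
      ¬H.Adj x b → H.degree x ≤ H.degree a) :
    ∃ W : Finset V, #W = H.degree a - F.edgeSet.ncard ∧ ∀ x ∈ W, H.degree x ≤ H.degree a := by
  classical
  set N := {t ∈ p.darts.toFinset | H.Adj a t.snd}
  have hN : ∀ t ∈ N, t ∈ p.darts ∧ H.Adj a t.snd := fun t ht => by simpa using mem_filter.mp ht
  set good := {t ∈ N | t.edge ∉ F.edgeSet}
  have hgood : H.degree a - F.edgeSet.ncard ≤ #(good.image (·.fst)) := by
    rw [card_image_of_injOn
      (hp.isPath.injOn_fst_darts.mono fun t ht => (hN t (mem_filter.mp ht).1).1)]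
    have hbad := hp.isPath.card_le_ncard_edgeSet (s := {t ∈ N | t.edge ∈ F.edgeSet})
      fun t ht => ⟨(hN t (mem_filter.mp ht).1).1, (mem_filter.mp ht).2⟩
    have := card_filter_add_card_filter_not (s := N) (p := fun t => t.edge ∈ F.edgeSet)
    rw [hp.card_filter_adj_snd] at this
    omega
  obtain ⟨W, hW, hWcard⟩ := exists_subset_card_eq hgood
  refine ⟨W, hWcard, fun x hx => ?_⟩
  obtain ⟨t, ht, rfl⟩ := mem_image.mp (hW hx)
  obtain ⟨htN, htF⟩ := mem_filter.mp ht
  obtain ⟨htp, ha⟩ := hN t htN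
  obtain ⟨q, hq, -, hqe⟩ := hp.exists_rotate htp ha
  exact hmax _ q hq (fun e he => hqe e (hpF e he) fun h => htF (h ▸ he))
    (hp.not_adj_fst_of_adj_snd hpF hab hH htp ha htF)

theorem IsLSaturated.exists_low_degree_vertices [Fintype V] {ℓ : ℕ} [DecidableRel H.Adj]
    (hH : H.IsLSaturated ℓ) (hV : 3 ≤ Fintype.card V) :
    ∃ (a : V) (W : Finset V), 2 * H.degree a ≤ Fintype.card V - 1 + ℓ ∧
      #W = H.degree a - ℓ ∧ ∀ x ∈ W, H.degree x ≤ H.degree a := by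
  obtain ⟨F, hFH, hF, hFℓ, hHF⟩ : ∃ F ≤ H, F.IsLinearForest ∧ F.edgeSet.ncard = ℓ ∧
      ¬H.HasHamiltonianCycleThrough F := by
    simpa [IsLHamiltonian, HasHamiltonianCycleThrough] using hH.1
  obtain ⟨u, v, huv, hnadj⟩ : ∃ u v, u ≠ v ∧ ¬H.Adj u v := by
    by_contra! h
    have hH_top : H = ⊤ := by
      ext u v
      exact ⟨fun huv => huv.ne, fun huv => h u v huv⟩
    exact hH.1 (hH_top ▸ isLHamiltonian_top hV ℓ)
  set P : V → V → Prop := fun a b => ¬H.Adj a b ∧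
    ∃ p : H.Walk a b, p.IsHamiltonian ∧ ∀ e ∈ F.edgeSet, e ∈ p.edges
  have hPswap : ∀ a b, P a b → P b a := fun a b ⟨hab, p, hp, hpF⟩ =>
    ⟨fun h => hab h.symm, p.reverse, hp.reverse, fun e he => by simpa using hpF e he⟩
  have hP : P v u := ⟨fun h => hnadj h.symm,
    exists_isHamiltonian_of_hasHamiltonianCycleThrough_sup_edge hFH hnadj hHF
      (hH.2 u v huv hnadj F (hFH.trans le_sup_left) hF hFℓ)⟩
  classical
  obtain ⟨⟨a₀, b₀⟩, hab₀, hmax₀⟩ := exists_max_image {ab : V × V | P ab.1 ab.2}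
    (fun ab => H.degree ab.1 + H.degree ab.2) ⟨(v, u), by simpa using hP⟩
  simp only [mem_filter, mem_univ, true_and, Prod.forall] at hab₀ hmax₀
  obtain ⟨a, b, ⟨hnab, p, hp, hpF⟩, hmax, hle⟩ : ∃ a b, P a b ∧
      (∀ x y, P x y → H.degree x + H.degree y ≤ H.degree a + H.degree b) ∧
      H.degree a ≤ H.degree b := by
    rcases le_total (H.degree a₀) (H.degree b₀) with h | h
    · exact ⟨a₀, b₀, hab₀, hmax₀, h⟩
    · exact ⟨b₀, a₀, hPswap _ _ hab₀, fun x y hxy => (hmax₀ x y hxy).trans_eq (add_comm _ _), h⟩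
  have hOre := hp.degree_add_degree_le hpF hnab hHF
  obtain ⟨W, hW, hWdeg⟩ := hp.exists_card_eq_forall_degree_le hpF hnab hHF
    fun x q hq hqF hxb => by have := hmax x b ⟨hxb, q, hq, hqF⟩; omega
  exact ⟨a, W, by omega, hFℓ ▸ hW, hWdeg⟩

end Saturated

/-- Edges avoiding `W` live on `n - #W` vertices; the others are counted by the degrees in `W`. -/
theorem card_edgeFinset_le_of_forall_degree_le [Fintype V] [DecidableEq V]
    (H : SimpleGraph V) [DecidableRel H.Adj] {W : Finset V} {k : ℕ}
    (hW : ∀ w ∈ W, H.degree w ≤ k) :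
    #H.edgeFinset ≤ (Fintype.card V - #W).choose 2 + #W * k := by
  set s : Set V := {x | x ∉ W}
  have hsub : H.edgeFinset ⊆
      (H.edgeFinset ∩ s.toFinset.sym2) ∪ W.biUnion fun w => H.incidenceFinset w := by
    intro e he
    by_cases h : ∃ w ∈ e, w ∈ W
    · obtain ⟨w, hwe, hw⟩ := h
      refine mem_union_right _ (mem_biUnion.mpr ⟨w, hw, ?_⟩)
      simpa [mem_incidenceFinset] using ⟨mem_edgeFinset.mp he, hwe⟩
    · push Not at h
      refine mem_union_left _ (mem_inter.mpr ⟨he, mem_sym2_iff.mpr fun w hw => ?_⟩)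
      simpa [s] using h w hw
  have hinside : #(H.edgeFinset ∩ s.toFinset.sym2) ≤ (Fintype.card V - #W).choose 2 := by
    rw [← map_edgeFinset_induce, card_map]
    refine card_edgeFinset_le_card_choose_two.trans_eq ?_
    rw [← Set.toFinset_card]
    simp [s, filter_not, card_sdiff]
  have hout : #(W.biUnion fun w => H.incidenceFinset w) ≤ #W * k := by
    refine card_biUnion_le.trans ?_
    simpa [card_incidenceFinset_eq_degree] using sum_le_card_nsmul W _ k hW
  exact (card_le_card hsub).trans ((card_union_le _ _).trans (add_le_add hinside hout))

end SimpleGraph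

theorem cast_hfun {n j ℓ : ℕ} (hℓj : ℓ ≤ j) (hjn : j ≤ n) :
    (hfun n j ℓ : ℚ) = (n - j + ℓ) * (n - j + ℓ - 1) / 2 + (j - ℓ) * j := by
  rw [hfun, Nat.cast_add, Nat.cast_choose_two, Nat.cast_mul]
  push_cast [Nat.cast_sub hℓj, Nat.cast_sub hjn]
  ring

/-- `k ↦ h(n,k,ℓ)` is a convex quadratic, so on `[d, m]` it is largest at an endpoint. -/
theorem hfun_le_max {n d k m ℓ : ℕ} (hℓd : ℓ ≤ d) (hdk : d ≤ k) (hkm : k ≤ m) (hmn : m ≤ n) :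
    hfun n k ℓ ≤ max (hfun n d ℓ) (hfun n m ℓ) := by
  rw [le_max_iff, ← @Nat.cast_le ℚ, ← @Nat.cast_le ℚ, cast_hfun (hℓd.trans hdk) (hkm.trans hmn),
    cast_hfun hℓd (hdk.trans (hkm.trans hmn)), cast_hfun (hℓd.trans (hdk.trans hkm)) hmn]
  have hdk' : (d : ℚ) ≤ k := by exact_mod_cast hdk
  have hkm' : (k : ℚ) ≤ m := by exact_mod_cast hkm
  by_contra! h
  rcases eq_or_lt_of_le hkm' with hkm' | hkm'
  · exact lt_irrefl _ (hkm' ▸ h.2)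
  -- for the quadratic `f`: `(m-k) f(d) + (k-d) f(m) - (m-d) f(k) = 3/2 (m-k)(k-d)(m-d) ≥ 0`
  · nlinarith [mul_lt_mul_of_pos_left h.1 (sub_pos.mpr hkm'),
      mul_le_mul_of_nonneg_left h.2.le (sub_nonneg.mpr hdk'),
      mul_nonneg (mul_nonneg (sub_nonneg.mpr hdk') (sub_nonneg.mpr hkm'.le))
        (sub_nonneg.mpr (hdk'.trans hkm'.le))]

/-- If `0 ≤ ℓ < d ≤ ⌊(n+ℓ-1)/2⌋` and `G` is an `n`-vertex graph with minimum degree at least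
`d` which is not `ℓ`-hamiltonian, then `e(G) ≤ max{h(n,d,ℓ), h(n,⌊(n+ℓ-1)/2⌋,ℓ)}`. -/
theorem edge_count_not_lHamiltonian {n d ℓ : ℕ} (hld : ℓ < d) (hd : d ≤ (n + ℓ - 1) / 2)
    (G : SimpleGraph (Fin n)) [DecidableRel G.Adj]
    (hmin : ∀ v : Fin n, d ≤ G.degree v) (hham : ¬ G.IsLHamiltonian ℓ) :
    G.edgeSet.ncard ≤ max (hfun n d ℓ) (hfun n ((n + ℓ - 1) / 2) ℓ) := by
  classical
  obtain ⟨H, hGH, hH⟩ := exists_le_isLSaturated hham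
  obtain ⟨a, W, hOre, hW, hWdeg⟩ :=
    hH.exists_low_degree_vertices (by rw [Fintype.card_fin]; omega)
  rw [Fintype.card_fin] at hOre
  have hda : d ≤ H.degree a := (hmin a).trans (degree_le_of_le hGH)
  calc G.edgeSet.ncard ≤ H.edgeSet.ncard := Set.ncard_le_ncard (edgeSet_mono hGH)
    _ = H.edgeFinset.card := by rw [← coe_edgeFinset, Set.ncard_coe_finset]
    _ ≤ (n - W.card).choose 2 + W.card * H.degree a := by
      simpa using card_edgeFinset_le_of_forall_degree_le H hWdeg
    _ = hfun n (H.degree a) ℓ := by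
      rw [hfun, hW, show n - (H.degree a - ℓ) = n - H.degree a + ℓ by omega]
    _ ≤ _ := hfun_le_max hld.le hda (by omega) (by omega)
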